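/- Let L ≥ 1, η, ξ₊, ξ₋ ∈ ℂ, and let x_1,…,x_L, z_1,…,z_L ∈ ℂ satisfy: x_1²,…,x_L² pairwise distinct; z_1²,…,z_L² pairwise distinct; z_i ≠ 0 for all i; and (z_i + η/2)² ≠ x_k² and (z_i − η/2)² ≠ x_k² for all i,k. Then A_{{z}}[f_{ξ₊,ξ₋,{x}}] = I_{ξ₊,ξ₋}({z},{x}). -/
import Mathlib


open Finset

/-- `A_{{z}}[f]` as a ratio of determinants. -/
noncomputable def Afun {L : ℕ} (η : ℂ) (z : Fin L → ℂ) (f : ℂ → ℂ) : ℂ :=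
  Matrix.det (Matrix.of fun i j : Fin L =>
      f (z i) * (z i + η / 2) ^ (2 * (j : ℕ)) + f (-z i) * (z i - η / 2) ^ (2 * (j : ℕ)))
    / Matrix.det (Matrix.of fun i j : Fin L => z i ^ (2 * (j : ℕ)))

/-- `f_{ξ₊,ξ₋,{x}}(λ) = ((λ+ξ₊)(λ+ξ₋)/λ) ∏_m (λ²−x_m²)/((λ+η/2)²−x_m²)`. -/
noncomputable def fFun (η ξp ξm : ℂ) {M : ℕ} (x : Fin M → ℂ) (lam : ℂ) : ℂ :=
  ((lam + ξp) * (lam + ξm) / lam) *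
    ∏ m, ((lam ^ 2 - x m ^ 2) / ((lam + η / 2) ^ 2 - x m ^ 2))

/-- The kernel `I_{ξ₊,ξ₋}(u,v)`. -/
noncomputable def Iker (η ξp ξm u v : ℂ) : ℂ :=
  (u + ξp) * (u + ξm) / (u * ((u + η / 2) ^ 2 - v ^ 2))
    - (u - ξp) * (u - ξm) / (u * ((u - η / 2) ^ 2 - v ^ 2))

/-- The generalized Izergin determinant `I_{ξ₊,ξ₋}({u},{v})`. -/
noncomputable def IDet {L : ℕ} (η ξp ξm : ℂ) (u v : Fin L → ℂ) : ℂ :=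
  ((∏ j, ∏ k, (u j ^ 2 - v k ^ 2)) /
      ∏ j, ∏ k ∈ Finset.Ioi j, ((u j ^ 2 - u k ^ 2) * (v k ^ 2 - v j ^ 2))) *
    Matrix.det (Matrix.of fun i j : Fin L => Iker η ξp ξm (u i) (v j))

lemma lagrange_pow {L : ℕ} (W : Fin L → ℂ) (hW : Function.Injective W)
    (j : ℕ) (hj : j < L) (t : ℂ) :
    t ^ j = ∑ k, W k ^ j *
      ((∏ m ∈ Finset.univ.erase k, (W k - W m))⁻¹ * ∏ m ∈ Finset.univ.erase k, (t - W m)) := by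
  have h1 : (Polynomial.X ^ j : Polynomial ℂ)
      = Lagrange.interpolate Finset.univ W (fun k => W k ^ j) := by
    apply Lagrange.eq_interpolate_of_eval_eq _ (Set.injOn_of_injective hW)
    · rw [Polynomial.degree_X_pow, Finset.card_univ, Fintype.card_fin]
      exact_mod_cast hj
    · intro i _; simp
  have h2 := congrArg (Polynomial.eval t) h1
  simp only [Polynomial.eval_pow, Polynomial.eval_X, Lagrange.interpolate_apply,
    Polynomial.eval_finset_sum, Polynomial.eval_mul, Polynomial.eval_C,
    Lagrange.basis, Polynomial.eval_prod, Lagrange.basisDivisor,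
    Polynomial.eval_sub, Finset.prod_mul_distrib, Finset.prod_inv_distrib] at h2
  convert h2 using 2

lemma frac_expand {L : ℕ} (W : Fin L → ℂ) (hW : Function.Injective W)
    (j : ℕ) (hj : j < L) (t : ℂ) (ht : ∀ m, t - W m ≠ 0) :
    t ^ j / (∏ m, (t - W m)) =
      ∑ k, W k ^ j * (∏ m ∈ Finset.univ.erase k, (W k - W m))⁻¹ * (t - W k)⁻¹ := by
  rw [lagrange_pow W hW j hj t, Finset.sum_div]
  refine Finset.sum_congr rfl fun k _ => ?_
  rw [← Finset.mul_prod_erase Finset.univ (fun m => t - W m) (Finset.mem_univ k)]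
  have h1 : (∏ m ∈ Finset.univ.erase k, (t - W m)) ≠ 0 :=
    Finset.prod_ne_zero_iff.2 fun m _ => ht m
  have h2 : (∏ m ∈ Finset.univ.erase k, (W k - W m)) ≠ 0 :=
    Finset.prod_ne_zero_iff.2 fun m hm => sub_ne_zero.2 fun h => (Finset.mem_erase.1 hm).1 (hW h).symm
  rw [div_eq_mul_inv, mul_inv]
  have h3 : W k ^ j * ((∏ m ∈ Finset.univ.erase k, (W k - W m))⁻¹ *
      ∏ m ∈ Finset.univ.erase k, (t - W m)) *
      ((t - W k)⁻¹ * (∏ m ∈ Finset.univ.erase k, (t - W m))⁻¹)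
      = (W k ^ j * (∏ m ∈ Finset.univ.erase k, (W k - W m))⁻¹ * (t - W k)⁻¹) *
        ((∏ m ∈ Finset.univ.erase k, (t - W m)) * (∏ m ∈ Finset.univ.erase k, (t - W m))⁻¹) := by
    ring
  rw [h3, mul_inv_cancel₀ h1, mul_one]

lemma aux_id (ξp ξm P q D u α β : ℂ) (hu : u ≠ 0) (hα : α ≠ 0) (hβ : β ≠ 0) :
    ((u + ξp) * (u + ξm) / u * P) * (q * D * α⁻¹)
      + ((-u + ξp) * (-u + ξm) / (-u) * P) * (q * D * β⁻¹)
    = P * ((u + ξp) * (u + ξm) / (u * α) - (u - ξp) * (u - ξm) / (u * β)) * (q * D) := by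
  field_simp
  ring

lemma entry_eq {L : ℕ} (η ξp ξm : ℂ) (x : Fin L → ℂ)
    (hW : Function.Injective (fun m : Fin L => x m ^ 2))
    (u : ℂ) (hu : u ≠ 0)
    (hUm : ∀ m, (u + η / 2) ^ 2 - x m ^ 2 ≠ 0) (hVm : ∀ m, (u - η / 2) ^ 2 - x m ^ 2 ≠ 0)
    (j : ℕ) (hj : j < L) :
    fFun η ξp ξm x u * (u + η / 2) ^ (2 * j) + fFun η ξp ξm x (-u) * (u - η / 2) ^ (2 * j)
    = ∑ k, ((∏ m, (u ^ 2 - x m ^ 2)) * Iker η ξp ξm u (x k)) *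
        ((x k ^ 2) ^ j * (∏ m ∈ Finset.univ.erase k, (x k ^ 2 - x m ^ 2))⁻¹) := by
  have key : ∀ (c T : ℂ), (∀ m, T - x m ^ 2 ≠ 0) →
      (c * ∏ m, ((u ^ 2 - x m ^ 2) / (T - x m ^ 2))) * T ^ j
      = ∑ k, c * (∏ m, (u ^ 2 - x m ^ 2)) *
          ((x k ^ 2) ^ j * (∏ m ∈ Finset.univ.erase k, (x k ^ 2 - x m ^ 2))⁻¹ *
            (T - x k ^ 2)⁻¹) := by
    intro c T hT
    have h := frac_expand (fun m : Fin L => x m ^ 2) hW j hj T hT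
    calc (c * ∏ m, ((u ^ 2 - x m ^ 2) / (T - x m ^ 2))) * T ^ j
        = c * (∏ m, (u ^ 2 - x m ^ 2)) * (T ^ j / ∏ m, (T - x m ^ 2)) := by
          rw [Finset.prod_div_distrib]; ring
      _ = _ := by rw [h, Finset.mul_sum]
  have e2 : fFun η ξp ξm x (-u) = ((-u + ξp) * (-u + ξm) / (-u)) *
      ∏ m, ((u ^ 2 - x m ^ 2) / ((u - η / 2) ^ 2 - x m ^ 2)) := by
    rw [fFun]
    congr 1
    refine Finset.prod_congr rfl fun m _ => ?_
    have ha : (-u) ^ 2 = u ^ 2 := by ring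
    have hb : (-u + η / 2) ^ 2 = (u - η / 2) ^ 2 := by ring
    rw [ha, hb]
  rw [fFun, e2, pow_mul, pow_mul]
  set Uq := (u + η / 2) ^ 2 with hUq
  set Vq := (u - η / 2) ^ 2 with hVq
  clear_value Uq Vq
  rw [key _ _ (fun m => hUm m), key _ _ (fun m => hVm m), ← Finset.sum_add_distrib]
  refine Finset.sum_congr rfl fun k _ => ?_
  rw [Iker, ← hUq, ← hVq]
  exact aux_id ξp ξm (∏ m, (u ^ 2 - x m ^ 2)) ((x k ^ 2) ^ j)
    ((∏ m ∈ Finset.univ.erase k, (x k ^ 2 - x m ^ 2))⁻¹) u (Uq - x k ^ 2) (Vq - x k ^ 2)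
    hu (hUm k) (hVm k)

set_option maxHeartbeats 2000000 in
theorem stmt9 (L : ℕ) (hL : 1 ≤ L) (η ξp ξm : ℂ)
    (x z : Fin L → ℂ)
    (hx : ∀ i j, i ≠ j → x i ^ 2 ≠ x j ^ 2)
    (hz : ∀ i j, i ≠ j → z i ^ 2 ≠ z j ^ 2)
    (hz0 : ∀ i, z i ≠ 0)
    (hzx : ∀ i k, (z i + η / 2) ^ 2 ≠ x k ^ 2 ∧ (z i - η / 2) ^ 2 ≠ x k ^ 2) :
    Afun η z (fFun η ξp ξm x) = IDet η ξp ξm z x := by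
  classical
  have hWinj : Function.Injective (fun m : Fin L => x m ^ 2) := by
    intro a b h
    by_contra hab
    exact hx a b hab h
  -- matrix factorization of the numerator
  have hN : (Matrix.of fun i j : Fin L =>
      fFun η ξp ξm x (z i) * (z i + η / 2) ^ (2 * (j : ℕ))
        + fFun η ξp ξm x (-z i) * (z i - η / 2) ^ (2 * (j : ℕ)))
      = (Matrix.of fun i k : Fin L =>
          (∏ m, (z i ^ 2 - x m ^ 2)) * Iker η ξp ξm (z i) (x k))
        * (Matrix.of fun k j : Fin L =>
          (x k ^ 2) ^ (j : ℕ) * (∏ m ∈ Finset.univ.erase k, (x k ^ 2 - x m ^ 2))⁻¹) := by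
    ext i j
    rw [Matrix.mul_apply]
    simpa using entry_eq η ξp ξm x hWinj (z i) (hz0 i)
      (fun m => sub_ne_zero.2 (hzx i m).1) (fun m => sub_ne_zero.2 (hzx i m).2) j j.isLt
  have hKdet : (Matrix.of fun i k : Fin L =>
        (∏ m, (z i ^ 2 - x m ^ 2)) * Iker η ξp ξm (z i) (x k)).det
      = (∏ i, ∏ m, (z i ^ 2 - x m ^ 2)) *
        (Matrix.of fun i j : Fin L => Iker η ξp ξm (z i) (x j)).det := by
    have h : (Matrix.of fun i k : Fin L =>
          (∏ m, (z i ^ 2 - x m ^ 2)) * Iker η ξp ξm (z i) (x k))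
        = Matrix.diagonal (fun i => ∏ m, (z i ^ 2 - x m ^ 2)) *
          Matrix.of (fun i j : Fin L => Iker η ξp ξm (z i) (x j)) := by
      ext i k
      rw [Matrix.diagonal_mul]
      rfl
    rw [h, Matrix.det_mul, Matrix.det_diagonal]
  have hCdet : (Matrix.of fun k j : Fin L =>
        (x k ^ 2) ^ (j : ℕ) * (∏ m ∈ Finset.univ.erase k, (x k ^ 2 - x m ^ 2))⁻¹).det
      = (∏ k, (∏ m ∈ Finset.univ.erase k, (x k ^ 2 - x m ^ 2))⁻¹) *
        ∏ i, ∏ j ∈ Finset.Ioi i, (x j ^ 2 - x i ^ 2) := by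
    have h : (Matrix.of fun k j : Fin L =>
          (x k ^ 2) ^ (j : ℕ) * (∏ m ∈ Finset.univ.erase k, (x k ^ 2 - x m ^ 2))⁻¹)
        = Matrix.diagonal (fun k => (∏ m ∈ Finset.univ.erase k, (x k ^ 2 - x m ^ 2))⁻¹) *
          Matrix.vandermonde (fun k => x k ^ 2) := by
      ext k j
      rw [Matrix.diagonal_mul, Matrix.vandermonde_apply]
      exact mul_comm _ _
    rw [h, Matrix.det_mul, Matrix.det_diagonal, Matrix.det_vandermonde]
  have hDden : (Matrix.of fun i j : Fin L => z i ^ (2 * (j : ℕ)))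
      = Matrix.vandermonde (fun i => z i ^ 2) := by
    ext i j
    rw [Matrix.vandermonde_apply]
    exact pow_mul _ 2 _
  unfold Afun IDet
  rw [hN, Matrix.det_mul, hKdet, hCdet, hDden, Matrix.det_vandermonde]
  -- scalar endgame
  rw [Finset.prod_inv_distrib]
  have hDd : (∏ k, ∏ m ∈ Finset.univ.erase k, (x k ^ 2 - x m ^ 2))
      = ∏ i, ∏ j ∈ Finset.Ioi i, ((x i ^ 2 - x j ^ 2) * (x j ^ 2 - x i ^ 2)) := by
    simp_rw [← Finset.compl_singleton]
    convert (Finset.prod_prod_Ioi_mul_eq_prod_prod_off_diag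
      fun a b : Fin L => x b ^ 2 - x a ^ 2).symm using 2
  rw [hDd]
  have hsplit : ∀ (a : Fin L → ℂ), (∏ i, ∏ j ∈ Finset.Ioi i, (a i - a j))
      = (∏ i : Fin L, ∏ j ∈ Finset.Ioi i, (-1 : ℂ)) * ∏ i, ∏ j ∈ Finset.Ioi i, (a j - a i) := by
    intro a
    rw [← Finset.prod_mul_distrib]
    refine Finset.prod_congr rfl fun i _ => ?_
    rw [← Finset.prod_mul_distrib]
    exact Finset.prod_congr rfl fun j _ => by ring
  have h1 : (∏ i, ∏ j ∈ Finset.Ioi i, ((x i ^ 2 - x j ^ 2) * (x j ^ 2 - x i ^ 2)))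
      = ((∏ i : Fin L, ∏ j ∈ Finset.Ioi i, (-1 : ℂ)) *
          ∏ i, ∏ j ∈ Finset.Ioi i, (x j ^ 2 - x i ^ 2)) *
        ∏ i, ∏ j ∈ Finset.Ioi i, (x j ^ 2 - x i ^ 2) := by
    simp_rw [Finset.prod_mul_distrib]
    rw [← hsplit (fun i => x i ^ 2)]
  have h2 : (∏ j, ∏ k ∈ Finset.Ioi j, ((z j ^ 2 - z k ^ 2) * (x k ^ 2 - x j ^ 2)))
      = ((∏ i : Fin L, ∏ j ∈ Finset.Ioi i, (-1 : ℂ)) *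
          ∏ i, ∏ j ∈ Finset.Ioi i, (z j ^ 2 - z i ^ 2)) *
        ∏ i, ∏ j ∈ Finset.Ioi i, (x j ^ 2 - x i ^ 2) := by
    simp_rw [Finset.prod_mul_distrib]
    rw [← hsplit (fun i => z i ^ 2)]
  have hVWne : (∏ i, ∏ j ∈ Finset.Ioi i, (x j ^ 2 - x i ^ 2)) ≠ 0 :=
    Finset.prod_ne_zero_iff.2 fun i _ => Finset.prod_ne_zero_iff.2 fun j hj =>
      sub_ne_zero.2 (hx j i (ne_of_mem_of_not_mem hj Finset.notMem_Ioi_self))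
  have hVZne : (∏ i, ∏ j ∈ Finset.Ioi i, (z j ^ 2 - z i ^ 2)) ≠ 0 :=
    Finset.prod_ne_zero_iff.2 fun i _ => Finset.prod_ne_zero_iff.2 fun j hj =>
      sub_ne_zero.2 (hz j i (ne_of_mem_of_not_mem hj Finset.notMem_Ioi_self))
  have hsne : (∏ i : Fin L, ∏ j ∈ Finset.Ioi i, (-1 : ℂ)) ≠ 0 :=
    Finset.prod_ne_zero_iff.2 fun i _ => Finset.prod_ne_zero_iff.2 fun j _ => by norm_num
  rw [h1, h2]
  set S := (∏ i : Fin L, ∏ j ∈ Finset.Ioi i, (-1 : ℂ)) with hS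
  set VW := (∏ i, ∏ j ∈ Finset.Ioi i, (x j ^ 2 - x i ^ 2)) with hVWd
  set VZ := (∏ i, ∏ j ∈ Finset.Ioi i, (z j ^ 2 - z i ^ 2)) with hVZd
  clear_value S VW VZ
  field_simp
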